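/- arXiv:1108.3385 — 5 statements merged into one kernel-verified Lean document; each statement's English description precedes it below -/
import Mathlib

section
/- Let d ≥ 1, γ > −1, n ∈ ℕ, let x_1,…,x_N be points of T^d and λ_1,…,λ_N real numbers, and set ξ_k = (x_k, 1−|x_k|_1) ∈ 𝒯^{d+1}. Then the cubature rule w_γ ∫_{T^d} f(x) W_γ(x) dx = Σ_{k=1}^N λ_k f(x_k) holds for every polynomial f ∈ Π_n^d if and only if the rule of index n, w_γ ∫_{𝒯^{d+1}} F(ξ) ξ^γ dξ = Σ_{k=1}^N λ_k F(ξ_k), holds for every homogeneous polynomial F ∈ 𝒫_n^{d+1}. -/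
open MeasureTheory Finset

/-- The standard simplex `T^d` in `ℝ^d`. -/
def Td (d : ℕ) : Set (Fin d → ℝ) :=
  {x | (∀ i, 0 ≤ x i) ∧ ∑ i, x i ≤ 1}

/-- The weight function `W_γ(x) = (x_1 ⋯ x_d (1 - |x|₁))^γ` on `T^d`. -/
noncomputable def Wg (d : ℕ) (γ : ℝ) (x : Fin d → ℝ) : ℝ :=
  ((∏ i, x i) * (1 - ∑ i, x i)) ^ γ

/-- The normalization constant `w_γ = Γ((d+1)(γ+1)) / Γ(γ+1)^(d+1)`. -/
noncomputable def wg (d : ℕ) (γ : ℝ) : ℝ :=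
  Real.Gamma ((d + 1) * (γ + 1)) / (Real.Gamma (γ + 1)) ^ (d + 1)

/-- Homogeneous coordinates: `x ↦ (x, 1 - |x|₁) ∈ 𝒯^{d+1}`. -/
noncomputable def lift (d : ℕ) (x : Fin d → ℝ) : Fin (d + 1) → ℝ :=
  Fin.snoc x (1 - ∑ i, x i)

/-!
On the hyperplane `ξ₁ + ⋯ + ξ_{d+1} = 1` the two classes of test functions coincide. Substituting
`ξ = (x, 1 - |x|₁)`, which is affine in `x`, turns a homogeneous `F` of degree `n` into a
polynomial of degree at most `n`; conversely, padding each homogeneous component `f_k` of a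
polynomial `f` of degree at most `n` with `(ξ₁ + ⋯ + ξ_{d+1})^(n-k)` gives a homogeneous
polynomial of degree `n` that agrees with `f` on the hyperplane. So both cubature conditions
test the same functions on `T^d`.
-/

namespace MvPolynomial

variable {R σ τ : Type*} [CommSemiring R]

theorem totalDegree_aeval_le {φ : σ → MvPolynomial τ R} (hφ : ∀ i, (φ i).totalDegree ≤ 1)
    (F : MvPolynomial σ R) : (aeval φ F).totalDegree ≤ F.totalDegree := by
  conv_lhs => rw [F.as_sum, map_sum]
  refine totalDegree_finsetSum_le fun m hm => ?_
  rw [aeval_monomial, algebraMap_eq]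
  calc (C (coeff m F) * m.prod fun i k => φ i ^ k).totalDegree
      ≤ ∑ i ∈ m.support, (φ i ^ m i).totalDegree := by
        refine (totalDegree_mul _ _).trans ?_
        rw [totalDegree_C, zero_add]
        exact totalDegree_finsetProd _ _
    _ ≤ ∑ i ∈ m.support, m i := sum_le_sum fun i _ =>
        (totalDegree_pow _ _).trans (by simpa using Nat.mul_le_mul_left (m i) (hφ i))
    _ ≤ F.totalDegree := le_totalDegree hm

noncomputable def homogenizeBy (e : σ → τ) (ℓ : MvPolynomial τ R) (n : ℕ)
    (f : MvPolynomial σ R) : MvPolynomial τ R :=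
  ∑ k ∈ range (n + 1), rename e (homogeneousComponent k f) * ℓ ^ (n - k)

theorem isHomogeneous_homogenizeBy (e : σ → τ) {ℓ : MvPolynomial τ R} (hℓ : ℓ.IsHomogeneous 1)
    (n : ℕ) (f : MvPolynomial σ R) : (homogenizeBy e ℓ n f).IsHomogeneous n := by
  refine IsHomogeneous.sum _ _ _ fun k hk => ?_
  have hkn : k + (n - k) = n := Nat.add_sub_cancel' (Nat.lt_succ_iff.mp (mem_range.mp hk))
  simpa [hkn] using (homogeneousComponent_isHomogeneous k f).rename_isHomogeneous.mul
    (hℓ.pow (n - k))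

theorem eval_homogenizeBy (e : σ → τ) (ℓ : MvPolynomial τ R) {n : ℕ} {f : MvPolynomial σ R}
    (hf : f.totalDegree ≤ n) {ξ : τ → R} (hξ : eval ξ ℓ = 1) :
    eval ξ (homogenizeBy e ℓ n f) = eval (ξ ∘ e) f := by
  have hcomp : ∑ k ∈ range (n + 1), homogeneousComponent k f = f := by
    rw [← sum_range_add_sum_Ico _ (Nat.succ_le_succ hf), sum_homogeneousComponent,
      sum_eq_zero fun k hk => homogeneousComponent_eq_zero _ _
        (Nat.succ_le_iff.mp (mem_Ico.mp hk).1), add_zero]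
  conv_rhs => rw [← hcomp]
  simp [homogenizeBy, eval_rename, hξ]

end MvPolynomial

open MvPolynomial

theorem sum_lift (d : ℕ) (y : Fin d → ℝ) : ∑ j, lift d y j = 1 := by
  simp [Fin.sum_univ_castSucc, lift]

theorem lift_comp_castSucc (d : ℕ) (y : Fin d → ℝ) : lift d y ∘ Fin.castSucc = y :=
  funext fun i => by simp [lift]

noncomputable def liftPoly (d : ℕ) : Fin (d + 1) → MvPolynomial (Fin d) ℝ :=
  Fin.snoc X (1 - ∑ i, X i)

theorem eval_comp_liftPoly (d : ℕ) (y : Fin d → ℝ) : eval y ∘ liftPoly d = lift d y := by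
  ext j
  induction j using Fin.lastCases <;> simp [liftPoly, lift]

theorem totalDegree_liftPoly_le (d : ℕ) (j : Fin (d + 1)) : (liftPoly d j).totalDegree ≤ 1 := by
  induction j using Fin.lastCases with
  | last =>
    simp only [liftPoly, Fin.snoc_last]
    refine (totalDegree_sub _ _).trans (max_le (by simp) (totalDegree_finsetSum_le fun i _ => ?_))
    simp [totalDegree_X]
  | cast i => simp [liftPoly, totalDegree_X]

theorem eval_aeval_liftPoly (d : ℕ) (y : Fin d → ℝ) (F : MvPolynomial (Fin (d + 1)) ℝ) :
    eval y (aeval (liftPoly d) F) = eval (lift d y) F := by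
  rw [aeval_def, algebraMap_eq, ← eval_assoc, eval_comp_liftPoly]

theorem cubature_simplex_degree_iff_index_general
    (d N n : ℕ) (γ : ℝ)
    (x : Fin N → (Fin d → ℝ)) (lam : Fin N → ℝ) :
    (∀ f : MvPolynomial (Fin d) ℝ, f.totalDegree ≤ n →
      wg d γ * ∫ y in Td d, MvPolynomial.eval y f * Wg d γ y
        = ∑ k, lam k * MvPolynomial.eval (x k) f)
    ↔
    (∀ F : MvPolynomial (Fin (d + 1)) ℝ, F.IsHomogeneous n →
      wg d γ * ∫ y in Td d, MvPolynomial.eval (lift d y) F * Wg d γ y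
        = ∑ k, lam k * MvPolynomial.eval (lift d (x k)) F) := by
  have hℓ : (∑ j, X j : MvPolynomial (Fin (d + 1)) ℝ).IsHomogeneous 1 :=
    IsHomogeneous.sum _ _ _ fun j _ => isHomogeneous_X _ _
  constructor
  · intro h F hF
    have hdeg := (totalDegree_aeval_le (totalDegree_liftPoly_le d) F).trans hF.totalDegree_le
    simpa only [eval_aeval_liftPoly] using h _ hdeg
  · intro h f hf
    have heval : ∀ y, eval (lift d y) (homogenizeBy Fin.castSucc (∑ j, X j) n f) = eval y f :=
      fun y => by rw [eval_homogenizeBy _ _ hf (by simp [sum_lift]), lift_comp_castSucc]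
    simpa only [heval] using h _ (isHomogeneous_homogenizeBy Fin.castSucc hℓ n f)

/-- A cubature rule of degree `n` for `W_γ` on `T^d`, with all nodes in `T^d`, holds for all
polynomials of degree at most `n` iff the corresponding rule of index `n` on `𝒯^{d+1}`
(with `ξ_k = (x_k, 1 - |x_k|₁)`) holds for all homogeneous polynomials of degree `n`. -/
theorem cubature_simplex_degree_iff_index
    (d N n : ℕ) (hd : 1 ≤ d) (γ : ℝ) (hγ : -1 < γ)
    (x : Fin N → (Fin d → ℝ)) (hx : ∀ k, x k ∈ Td d) (lam : Fin N → ℝ) :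
    (∀ f : MvPolynomial (Fin d) ℝ, f.totalDegree ≤ n →
      wg d γ * ∫ y in Td d, MvPolynomial.eval y f * Wg d γ y
        = ∑ k, lam k * MvPolynomial.eval (x k) f)
    ↔
    (∀ F : MvPolynomial (Fin (d + 1)) ℝ, F.IsHomogeneous n →
      wg d γ * ∫ y in Td d, MvPolynomial.eval (lift d y) F * Wg d γ y
        = ∑ k, lam k * MvPolynomial.eval (lift d (x k)) F) :=
  cubature_simplex_degree_iff_index_general d N n γ x lam
end

section
/- Let t ≥ 1 and let x_1,…,x_M ∈ S^d be pairwise non-antipodal points (x_i ≠ −x_j for i ≠ j) with weights λ_1,…,λ_M such that (1/σ(S^d)) ∫_{S^d} f dσ = Σ_{k=1}^M λ_k f(x_k) for every homogeneous polynomial f of degree 2t in d+1 variables. Then (1/σ(S^d)) ∫_{S^d} f dσ = Σ_{k=1}^M (λ_k/2)(f(x_k)+f(−x_k)) for every polynomial f of degree at most 2t+1 in d+1 variables. Conversely, if (1/σ(S^d)) ∫_{S^d} f dσ = Σ_{k=1}^M μ_k (f(x_k)+f(−x_k)) for every polynomial f of degree at most 2t+1, then (1/σ(S^d)) ∫_{S^d}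 f dσ = Σ_{k=1}^M 2μ_k f(x_k) for every homogeneous polynomial f of degree 2t. -/
/-!
On the unit sphere `∑ yᵢ² = 1`, multiplying the homogeneous component of degree `2s` of a
polynomial `f` of degree at most `2t+1` by `(∑ Xᵢ²)^(t-s)` changes none of its values, so the even
part `(f(y) + f(-y))/2 = ∑ₛ f_{2s}(y)` agrees on the sphere with a homogeneous polynomial `g` of
degree `2t`. Since surface measure is invariant under `y ↦ -y`, `f` and `g` have the same average
over the sphere, and a rule of index `2t` integrates `g` exactly. Conversely, a homogeneous `f` of
even degree satisfies `f(-y) = f(y)`.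
-/

open MeasureTheory Finset

theorem sum_range_one_add_neg_one_pow_mul {R : Type*} [CommRing R] (m : ℕ) (e : ℕ → R) :
    ∑ j ∈ range (2 * m), (1 + (-1 : R) ^ j) * e j = 2 * ∑ s ∈ range m, e (2 * s) := by
  induction m with
  | zero => simp
  | succ k ih =>
    rw [mul_add_one, sum_range_succ, sum_range_succ, ih, sum_range_succ,
      pow_succ, (even_two_mul k).neg_one_pow]
    ring

namespace MvPolynomial

variable {σ R : Type*}

theorem IsHomogeneous.eval_smul [CommSemiring R] {n : ℕ} {f : MvPolynomial σ R} (hf : f.IsHomogeneous n)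
    (c : R) (y : σ → R) : eval (c • y) f = c ^ n * eval y f := by
  rw [eval_eq, eval_eq, mul_sum]
  refine sum_congr rfl fun m hm => ?_
  have hdeg : ∑ i ∈ m.support, m i = n := by
    simpa [Finsupp.weight_apply, Finsupp.sum] using hf (mem_support_iff.mp hm)
  rw [← hdeg, ← prod_pow_eq_pow_sum]
  simp only [Pi.smul_apply, smul_eq_mul, mul_pow, prod_mul_distrib]
  ring

variable [CommRing R]

theorem IsHomogeneous.eval_neg {n : ℕ} {f : MvPolynomial σ R} (hf : f.IsHomogeneous n)
    (y : σ → R) : eval (-y) f = (-1) ^ n * eval y f := by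
  simpa using hf.eval_smul (-1) y

variable [Fintype σ]

noncomputable def evenHomogenization (t : ℕ) (f : MvPolynomial σ R) : MvPolynomial σ R :=
  ∑ s ∈ range (t + 1), homogeneousComponent (2 * s) f * (∑ i, X i ^ 2) ^ (t - s)

theorem isHomogeneous_evenHomogenization (t : ℕ) (f : MvPolynomial σ R) :
    (evenHomogenization t f).IsHomogeneous (2 * t) := by
  refine IsHomogeneous.sum _ _ _ fun s hs => ?_
  have hsq : (∑ i, X i ^ 2 : MvPolynomial σ R).IsHomogeneous 2 :=
    IsHomogeneous.sum _ _ _ fun i _ => isHomogeneous_X_pow i 2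
  have hdeg : 2 * s + 2 * (t - s) = 2 * t := by
    rw [mem_range] at hs
    omega
  simpa only [hdeg] using (homogeneousComponent_isHomogeneous (2 * s) f).mul (hsq.pow (t - s))

theorem eval_add_eval_neg_eq_two_mul_eval_evenHomogenization {t : ℕ} {f : MvPolynomial σ R}
    (hf : f.totalDegree ≤ 2 * t + 1) {y : σ → R} (hy : ∑ i, y i ^ 2 = 1) :
    eval y f + eval (-y) f = 2 * eval y (evenHomogenization t f) := by
  have hf_sum : ∑ j ∈ range (2 * (t + 1)), homogeneousComponent j f = f := by
    conv_rhs => rw [← sum_homogeneousComponent f]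
    refine (sum_subset (fun j hj => ?_) fun j hj hj' => ?_).symm
    · simp only [mem_range] at hj ⊢
      omega
    · simp only [mem_range] at hj hj'
      exact homogeneousComponent_eq_zero _ _ (by omega)
  have hq : eval y (∑ i, X i ^ 2) = 1 := by simpa using hy
  conv_lhs => rw [← hf_sum]
  simp only [map_sum, ← sum_add_distrib,
    fun j => (homogeneousComponent_isHomogeneous j f).eval_neg y, ← one_add_mul]
  rw [sum_range_one_add_neg_one_pow_mul, evenHomogenization]
  simp only [map_sum, map_mul, map_pow, hq, one_pow, mul_one]

end MvPolynomial

section NegInvariant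

variable {E : Type*} [MeasurableSpace E] [AddGroup E] [MeasurableNeg E]
  {μ : Measure E} [μ.IsNegInvariant] {S : Set E}

theorem setIntegral_comp_neg_of_neg_eq (hS : -S = S) (F : E → ℝ) :
    ∫ y in S, F (-y) ∂μ = ∫ y in S, F y ∂μ := by
  simpa [hS] using (Measure.measurePreserving_neg μ).setIntegral_preimage_emb
    (MeasurableEquiv.neg E).measurableEmbedding F S

theorem setIntegral_eq_of_add_comp_neg_eq_two_mul (hS : -S = S) (hS_meas : MeasurableSet S)
    {F G : E → ℝ} (hF : IntegrableOn F S μ) (hFG : ∀ y ∈ S, F y + F (-y) = 2 * G y) :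
    ∫ y in S, F y ∂μ = ∫ y in S, G y ∂μ := by
  have hF_neg : IntegrableOn (fun y => F (-y)) S μ := by simpa [hS] using hF.comp_neg
  have h2 : 2 * ∫ y in S, F y ∂μ = 2 * ∫ y in S, G y ∂μ :=
    calc 2 * ∫ y in S, F y ∂μ = (∫ y in S, F y ∂μ) + ∫ y in S, F (-y) ∂μ := by
          rw [setIntegral_comp_neg_of_neg_eq hS, two_mul]
      _ = ∫ y in S, (F y + F (-y)) ∂μ := (integral_add hF hF_neg).symm
      _ = ∫ y in S, 2 * G y ∂μ := setIntegral_congr_fun hS_meas hFG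
      _ = 2 * ∫ y in S, G y ∂μ := integral_const_mul 2 _
  linarith

theorem setAverage_eq_of_add_comp_neg_eq_two_mul [TopologicalSpace E] [T2Space E]
    [OpensMeasurableSpace E] (hS : -S = S) (hS_cpt : IsCompact S) {F G : E → ℝ}
    (hF : ContinuousOn F S) (hFG : ∀ y ∈ S, F y + F (-y) = 2 * G y) :
    ⨍ y in S, F y ∂μ = ⨍ y in S, G y ∂μ := by
  rcases eq_or_ne (μ S) ⊤ with hμS | hμS
  · simp [setAverage_eq, measureReal_def, hμS]
  obtain ⟨C, hC⟩ := hS_cpt.exists_bound_of_continuousOn hF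
  have hF_int : IntegrableOn F S μ :=
    ⟨hF.aestronglyMeasurable_of_isCompact hS_cpt hS_cpt.measurableSet,
      .restrict_of_bounded (C := C) hμS.lt_top (ae_restrict_of_forall_mem hS_cpt.measurableSet hC)⟩
  rw [setAverage_eq, setAverage_eq,
    setIntegral_eq_of_add_comp_neg_eq_two_mul hS hS_cpt.measurableSet hF_int hFG]

end NegInvariant

instance isNegInvariant_hausdorffMeasure {X : Type*} [NormedAddCommGroup X] [MeasurableSpace X] [BorelSpace X] (d : ℝ) :
    (μH[d] : Measure X).IsNegInvariant :=
  ⟨(IsometryEquiv.neg X).map_hausdorffMeasure d⟩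

theorem toReal_inv_mul_setIntegral_eq_setAverage {α : Type*} [MeasurableSpace α] (μ : Measure α)
    (S : Set α) (f : α → ℝ) : (μ S).toReal⁻¹ * ∫ x in S, f x ∂μ = ⨍ x in S, f x ∂μ := by
  rw [setAverage_eq, measureReal_def, smul_eq_mul]

theorem EuclideanSpace.sum_sq_eq_one_of_mem_sphere {ι : Type*} [Fintype ι]
    {y : EuclideanSpace ℝ ι} (hy : y ∈ Metric.sphere 0 1) : ∑ i, y i ^ 2 = 1 := by
  rw [← EuclideanSpace.real_norm_sq_eq, mem_sphere_zero_iff_norm.mp hy, one_pow]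

theorem cubature_index_iff_centrally_symmetric_general
    (d M t : ℕ)
    (x : Fin M → EuclideanSpace ℝ (Fin (d + 1)))
    (hx : ∀ k, x k ∈ Metric.sphere (0 : EuclideanSpace ℝ (Fin (d + 1))) 1) :
    (∀ lam : Fin M → ℝ,
      (∀ f : MvPolynomial (Fin (d + 1)) ℝ, f.IsHomogeneous (2 * t) →
        (μH[(d : ℝ)] (Metric.sphere (0 : EuclideanSpace ℝ (Fin (d + 1))) 1)).toReal⁻¹ *
            ∫ y in Metric.sphere (0 : EuclideanSpace ℝ (Fin (d + 1))) 1,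
              MvPolynomial.eval (fun i => y i) f ∂μH[(d : ℝ)]
          = ∑ k, lam k * MvPolynomial.eval (fun i => x k i) f) →
      (∀ f : MvPolynomial (Fin (d + 1)) ℝ, f.totalDegree ≤ 2 * t + 1 →
        (μH[(d : ℝ)] (Metric.sphere (0 : EuclideanSpace ℝ (Fin (d + 1))) 1)).toReal⁻¹ *
            ∫ y in Metric.sphere (0 : EuclideanSpace ℝ (Fin (d + 1))) 1,
              MvPolynomial.eval (fun i => y i) f ∂μH[(d : ℝ)]
          = ∑ k, (lam k / 2) *
              (MvPolynomial.eval (fun i => x k i) f + MvPolynomial.eval (fun i => -(x k i)) f)))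
    ∧
    (∀ mu : Fin M → ℝ,
      (∀ f : MvPolynomial (Fin (d + 1)) ℝ, f.totalDegree ≤ 2 * t + 1 →
        (μH[(d : ℝ)] (Metric.sphere (0 : EuclideanSpace ℝ (Fin (d + 1))) 1)).toReal⁻¹ *
            ∫ y in Metric.sphere (0 : EuclideanSpace ℝ (Fin (d + 1))) 1,
              MvPolynomial.eval (fun i => y i) f ∂μH[(d : ℝ)]
          = ∑ k, mu k *
              (MvPolynomial.eval (fun i => x k i) f + MvPolynomial.eval (fun i => -(x k i)) f)) →
      (∀ f : MvPolynomial (Fin (d + 1)) ℝ, f.IsHomogeneous (2 * t) →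
        (μH[(d : ℝ)] (Metric.sphere (0 : EuclideanSpace ℝ (Fin (d + 1))) 1)).toReal⁻¹ *
            ∫ y in Metric.sphere (0 : EuclideanSpace ℝ (Fin (d + 1))) 1,
              MvPolynomial.eval (fun i => y i) f ∂μH[(d : ℝ)]
          = ∑ k, 2 * mu k * MvPolynomial.eval (fun i => x k i) f)) := by
  simp only [toReal_inv_mul_setIntegral_eq_setAverage]
  refine ⟨fun lam hidx f hf => ?_, fun mu hsym f hf => ?_⟩
  · have hF : Continuous fun y : EuclideanSpace ℝ (Fin (d + 1)) =>
        MvPolynomial.eval (fun i => y i) f :=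
      (MvPolynomial.continuous_eval f).comp (PiLp.continuous_ofLp 2 _)
    have heven : ∀ y ∈ Metric.sphere (0 : EuclideanSpace ℝ (Fin (d + 1))) 1,
        MvPolynomial.eval (fun i => y i) f + MvPolynomial.eval (fun i => (-y) i) f
          = 2 * MvPolynomial.eval (fun i => y i) (MvPolynomial.evenHomogenization t f) :=
      fun y hy => MvPolynomial.eval_add_eval_neg_eq_two_mul_eval_evenHomogenization hf
        (EuclideanSpace.sum_sq_eq_one_of_mem_sphere hy)
    rw [setAverage_eq_of_add_comp_neg_eq_two_mul (by simp) (isCompact_sphere 0 1)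
      hF.continuousOn heven, hidx _ (MvPolynomial.isHomogeneous_evenHomogenization t f)]
    refine sum_congr rfl fun k _ => ?_
    have hk := heven (x k) (hx k)
    simp only [PiLp.neg_apply] at hk
    linear_combination -(lam k / 2) * hk
  · rw [hsym f (hf.totalDegree_le.trans (Nat.le_succ _))]
    refine sum_congr rfl fun k _ => ?_
    have hk : MvPolynomial.eval (fun i => -x k i) f = MvPolynomial.eval (fun i => x k i) f :=
      (hf.eval_neg (fun i => x k i)).trans (by rw [(even_two_mul t).neg_one_pow, one_mul])
    rw [hk]
    ring

/-- For pairwise non-antipodal points on `S^d`: a cubature rule of index `2t` extends to a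
centrally symmetric cubature rule of degree `2t+1`, and conversely a centrally symmetric
cubature rule of degree `2t+1` reduces to a cubature rule of index `2t`. -/
theorem cubature_index_iff_centrally_symmetric
    (d M t : ℕ) (ht : 1 ≤ t)
    (x : Fin M → EuclideanSpace ℝ (Fin (d + 1)))
    (hx : ∀ k, x k ∈ Metric.sphere (0 : EuclideanSpace ℝ (Fin (d + 1))) 1)
    (hpodal : ∀ i j, i ≠ j → x i ≠ -x j) :
    (∀ lam : Fin M → ℝ,
      (∀ f : MvPolynomial (Fin (d + 1)) ℝ, f.IsHomogeneous (2 * t) →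
        (μH[(d : ℝ)] (Metric.sphere (0 : EuclideanSpace ℝ (Fin (d + 1))) 1)).toReal⁻¹ *
            ∫ y in Metric.sphere (0 : EuclideanSpace ℝ (Fin (d + 1))) 1,
              MvPolynomial.eval (fun i => y i) f ∂μH[(d : ℝ)]
          = ∑ k, lam k * MvPolynomial.eval (fun i => x k i) f) →
      (∀ f : MvPolynomial (Fin (d + 1)) ℝ, f.totalDegree ≤ 2 * t + 1 →
        (μH[(d : ℝ)] (Metric.sphere (0 : EuclideanSpace ℝ (Fin (d + 1))) 1)).toReal⁻¹ *
            ∫ y in Metric.sphere (0 : EuclideanSpace ℝ (Fin (d + 1))) 1,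
              MvPolynomial.eval (fun i => y i) f ∂μH[(d : ℝ)]
          = ∑ k, (lam k / 2) *
              (MvPolynomial.eval (fun i => x k i) f + MvPolynomial.eval (fun i => -(x k i)) f)))
    ∧
    (∀ mu : Fin M → ℝ,
      (∀ f : MvPolynomial (Fin (d + 1)) ℝ, f.totalDegree ≤ 2 * t + 1 →
        (μH[(d : ℝ)] (Metric.sphere (0 : EuclideanSpace ℝ (Fin (d + 1))) 1)).toReal⁻¹ *
            ∫ y in Metric.sphere (0 : EuclideanSpace ℝ (Fin (d + 1))) 1,
              MvPolynomial.eval (fun i => y i) f ∂μH[(d : ℝ)]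
          = ∑ k, mu k *
              (MvPolynomial.eval (fun i => x k i) f + MvPolynomial.eval (fun i => -(x k i)) f)) →
      (∀ f : MvPolynomial (Fin (d + 1)) ℝ, f.IsHomogeneous (2 * t) →
        (μH[(d : ℝ)] (Metric.sphere (0 : EuclideanSpace ℝ (Fin (d + 1))) 1)).toReal⁻¹ *
            ∫ y in Metric.sphere (0 : EuclideanSpace ℝ (Fin (d + 1))) 1,
              MvPolynomial.eval (fun i => y i) f ∂μH[(d : ℝ)]
          = ∑ k, 2 * mu k * MvPolynomial.eval (fun i => x k i) f)) :=
  cubature_index_iff_centrally_symmetric_general d M t x hx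
end

section
/- Let d ≥ 2, t ≥ 1 and N ≥ 1. The following are equivalent: (i) there exist points x_1,…,x_N ∈ S^{d−1} and nonnegative weights λ_1,…,λ_N such that (1/σ(S^{d−1})) ∫_{S^{d−1}} f dσ = Σ_{i=1}^N λ_i f(x_i) for every homogeneous polynomial f of degree 2t in d variables; (ii) there exist vectors r_1,…,r_N ∈ ℝ^d such that Σ_{i=1}^N ⟨x, r_i⟩^{2t} = ⟨x, x⟩^t for every x ∈ ℝ^d, where ⟨·,·⟩ is the Euclidean inner product. -/
/-!
Both conditions are equivalent to the existence of unit vectors `xᵢ` and weights `λᵢ ≥ 0` with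
`∑ λᵢ ⟪w, xᵢ⟫ ^ 2t = a ‖w‖ ^ 2t` for all `w`, where `a > 0` is the normalized integral of
`⟪u, ·⟫ ^ 2t` over the sphere for a unit vector `u`: passing to (ii) is the rescaling
`rᵢ = (λᵢ / a) ^ (1 / 2t) • xᵢ`.

Condition (i) is reduced to this identity as follows: the sphere and its Hausdorff measure are
invariant under reflections, so the normalized integral of `⟪w, ·⟫ ^ 2t` is `a ‖w‖ ^ 2t`, and the
powers `(∑ wⱼ Xⱼ) ^ 2t` of linear forms span the homogeneous polynomials of degree `2t`.
Averaging over an orthonormal basis, the power mean inequality gives `a > 0`. The Hausdorff measure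
of the sphere is finite because the sphere is covered by the radial projections of the faces of
the cube `[-1, 1]^d`, which are Lipschitz since normalization is `1`-Lipschitz outside the unit
ball; it is positive because the sphere projects onto a neighbourhood of `0` in `ℝ^(d-1)`.
-/

open MeasureTheory Finset
open Metric RealInnerProductSpace NormedSpace

namespace MvPolynomial

variable {σ : Type*}

theorem _root_.LinearMap.map_monomial {R : Type*} [CommSemiring R]
    (L : MvPolynomial σ R →ₗ[R] R) (s : σ →₀ ℕ) (c : R) :
    L (monomial s c) = c * L (monomial s 1) := by
  rw [← smul_eq_mul, ← L.map_smul, smul_monomial, smul_eq_mul, mul_one]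

variable [Fintype σ]

theorem sum_C_mul_X_pow_eq_sum_piAntidiag [DecidableEq σ] {R : Type*} [CommSemiring R]
    (y : σ → R) (n : ℕ) :
    (∑ j, C (y j) * X j) ^ n = ∑ k ∈ piAntidiag univ n,
      monomial (Finsupp.equivFunOnFinite.symm k)
        ((Nat.multinomial univ k : R) * ∏ j, y j ^ k j) := by
  rw [sum_pow_eq_sum_piAntidiag]
  refine sum_congr rfl fun k _ => ?_
  rw [monomial_eq, Finsupp.prod_fintype _ _ fun _ => pow_zero _]
  simp only [mul_pow, ← map_pow, prod_mul_distrib, ← map_prod, map_mul, map_natCast,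
    Finsupp.coe_equivFunOnFinite_symm]
  ring

theorem isHomogeneous_sum_C_mul_X_pow {R : Type*} [CommSemiring R] (y : σ → R) (n : ℕ) :
    ((∑ j, C (y j) * X j) ^ n).IsHomogeneous n := by
  simpa using (IsHomogeneous.sum _ _ 1 fun j _ => isHomogeneous_C_mul_X (y j) j).pow n

theorem eval_sum_C_mul_X_pow (y : σ → ℝ) (z : EuclideanSpace ℝ σ) (n : ℕ) :
    eval (fun j => z j) ((∑ j, C (y j) * X j) ^ n) = ⟪WithLp.toLp 2 y, z⟫ ^ n := by
  simp [PiLp.inner_apply, mul_comm]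

variable {K : Type*} [Field K] [CharZero K]

theorem map_monomial_eq_zero_of_forall_map_sum_C_mul_X_pow {n : ℕ}
    (L : MvPolynomial σ K →ₗ[K] K) (h : ∀ y : σ → K, L ((∑ j, C (y j) * X j) ^ n) = 0)
    {s : σ →₀ ℕ} (hs : s.degree = n) : L (monomial s 1) = 0 := by
  classical
  -- By the multinomial theorem `P` evaluates at `y` to `L ((∑ j, C (y j) * X j) ^ n) = 0`,
  -- so `P = 0` and its coefficients `multinomial k * L (X ^ k)` vanish.
  set P : MvPolynomial σ K := ∑ k ∈ piAntidiag univ n,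
    monomial (Finsupp.equivFunOnFinite.symm k)
      ((Nat.multinomial univ k : K) * L (monomial (Finsupp.equivFunOnFinite.symm k) 1))
  have hP : P = 0 := by
    refine funext fun y => ?_
    rw [map_zero, ← h y, sum_C_mul_X_pow_eq_sum_piAntidiag, map_sum, map_sum]
    refine sum_congr rfl fun k _ => ?_
    rw [eval_monomial, Finsupp.prod_fintype _ _ fun _ => pow_zero _, L.map_monomial _ (_ * _)]
    simp only [Finsupp.coe_equivFunOnFinite_symm]
    ring
  have hcoeff := congrArg (coeff s) hP
  rw [coeff_sum, sum_eq_single (s : σ → ℕ)] at hcoeff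
  · simpa [(Nat.multinomial_pos univ s).ne'] using hcoeff
  · intro k _ hk
    rw [coeff_monomial, if_neg]
    exact fun he => hk (by rw [← he]; rfl)
  · intro hs'
    exact absurd (mem_piAntidiag.mpr ⟨by simpa [Finsupp.degree_eq_sum] using hs, by simp⟩) hs'

theorem map_eq_zero_of_isHomogeneous_of_forall_map_sum_C_mul_X_pow {n : ℕ}
    (L : MvPolynomial σ K →ₗ[K] K) (h : ∀ y : σ → K, L ((∑ j, C (y j) * X j) ^ n) = 0)
    {f : MvPolynomial σ K} (hf : f.IsHomogeneous n) : L f = 0 := by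
  rw [f.as_sum, map_sum]
  refine sum_eq_zero fun s hs => ?_
  rw [L.map_monomial, map_monomial_eq_zero_of_forall_map_sum_C_mul_X_pow L h, mul_zero]
  simpa [Finsupp.degree_eq_weight_one, Pi.one_def] using hf (mem_support_iff.mp hs)

theorem forall_isHomogeneous_map_eq_iff {n : ℕ} (L₁ L₂ : MvPolynomial σ K →ₗ[K] K) :
    (∀ f : MvPolynomial σ K, f.IsHomogeneous n → L₁ f = L₂ f) ↔
      ∀ y : σ → K, L₁ ((∑ j, C (y j) * X j) ^ n) = L₂ ((∑ j, C (y j) * X j) ^ n) := by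
  refine ⟨fun h y => h _ (isHomogeneous_sum_C_mul_X_pow y n), fun h f hf => ?_⟩
  rw [← sub_eq_zero, ← LinearMap.sub_apply]
  exact map_eq_zero_of_isHomogeneous_of_forall_map_sum_C_mul_X_pow _
    (fun y => by rw [LinearMap.sub_apply, h y, sub_self]) hf

end MvPolynomial

theorem NormedSpace.dist_normalize_le {E : Type*} [NormedAddCommGroup E] [InnerProductSpace ℝ E]
    {x y : E} (hx : 1 ≤ ‖x‖) (hy : 1 ≤ ‖y‖) : dist (normalize x) (normalize y) ≤ dist x y := by
  have hx0 : x ≠ 0 := norm_pos_iff.mp (by linarith)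
  have hy0 : y ≠ 0 := norm_pos_iff.mp (by linarith)
  have hu : ⟪normalize x, normalize y⟫ ≤ 1 := by
    simpa [norm_normalize hx0, norm_normalize hy0] using
      real_inner_le_norm (normalize x) (normalize y)
  have hinner : ⟪x, y⟫ = ‖x‖ * ‖y‖ * ⟪normalize x, normalize y⟫ := by
    conv_lhs => rw [← norm_smul_normalize x, ← norm_smul_normalize y]
    rw [real_inner_smul_left, real_inner_smul_right]; ring
  rw [dist_eq_norm, dist_eq_norm, ← sq_le_sq₀ (norm_nonneg _) (norm_nonneg _),
    norm_sub_sq_real, norm_sub_sq_real, norm_normalize hx0, norm_normalize hy0, hinner]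
  nlinarith [mul_nonneg (sub_nonneg.mpr (one_le_mul_of_one_le_of_one_le hx hy))
    (sub_nonneg.mpr hu), sq_nonneg (‖x‖ - ‖y‖)]

noncomputable def cubeFaceToSphere {m : ℕ} (j : Fin (m + 1)) (ε : ℝ) (v : Fin m → ℝ) :
    EuclideanSpace ℝ (Fin (m + 1)) :=
  normalize (WithLp.toLp 2 (j.insertNth ε v))

theorem exists_lipschitzWith_cubeFaceToSphere {m : ℕ} (j : Fin (m + 1)) {ε : ℝ} (hε : 1 ≤ |ε|) :
    ∃ K, LipschitzWith K (cubeFaceToSphere j ε) := by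
  obtain ⟨K, hK⟩ : ∃ K, LipschitzWith K (WithLp.toLp 2 : (Fin (m + 1) → ℝ) → _) :=
    ⟨_, PiLp.lipschitzWith_toLp 2 _⟩
  set face : (Fin m → ℝ) → Fin (m + 1) → ℝ := j.insertNth (α := fun _ => ℝ) ε with hface
  have hface_norm : ∀ v, 1 ≤ ‖WithLp.toLp 2 (face v)‖ := fun v =>
    hε.trans (by simpa [face] using PiLp.norm_apply_le (WithLp.toLp 2 (face v)) j)
  refine ⟨K, LipschitzWith.of_dist_le_mul fun v w => ?_⟩
  calc dist (cubeFaceToSphere j ε v) (cubeFaceToSphere j ε w)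
      ≤ dist (WithLp.toLp 2 (face v)) (WithLp.toLp 2 (face w)) :=
        dist_normalize_le (hface_norm v) (hface_norm w)
    _ ≤ K * dist (face v) (face w) := hK.dist_le_mul _ _
    _ = K * dist v w := by
        rw [hface, Fin.dist_insertNth_insertNth, dist_self, max_eq_right dist_nonneg]

theorem sphere_subset_iUnion_image_cubeFaceToSphere (m : ℕ) :
    sphere (0 : EuclideanSpace ℝ (Fin (m + 1))) 1 ⊆
      ⋃ j, ⋃ ε ∈ ({1, -1} : Set ℝ), cubeFaceToSphere j ε '' closedBall 0 1 := by
  intro y hy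
  obtain ⟨j, -, hj⟩ := exists_max_image univ (fun i => |y i|) univ_nonempty
  have hyj : 0 < |y j| := by
    by_contra! h
    have : y = 0 := by
      ext i
      simpa using (hj i (mem_univ i)).trans h
    simp [this] at hy
  refine Set.mem_iUnion.mpr ⟨j, Set.mem_iUnion₂.mpr
    ⟨y j / |y j|, ?_, fun i => y (j.succAbove i) / |y j|, ?_, ?_⟩⟩
  · rcases lt_or_gt_of_ne (abs_pos.mp hyj) with h | h
    · simp [abs_of_neg h, h.ne]
    · simp [abs_of_pos h, h.ne']
  · rw [mem_closedBall, dist_zero_right, pi_norm_le_iff_of_nonneg zero_le_one]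
    intro i
    rw [Real.norm_eq_abs, abs_div, abs_abs, div_le_one hyj]
    exact hj _ (mem_univ _)
  · have : WithLp.toLp 2 (j.insertNth (y j / |y j|) fun i => y (j.succAbove i) / |y j|) =
        |y j|⁻¹ • y := by
      ext i
      induction i using j.succAboveCases <;> simp [div_eq_inv_mul]
    rw [cubeFaceToSphere, this, normalize_smul_of_pos (inv_pos.mpr hyj),
      normalize_eq_self_of_norm_eq_one (mem_sphere_zero_iff_norm.mp hy)]

theorem hausdorffMeasure_fin_eq_volume (m : ℕ) : (μH[m] : Measure (Fin m → ℝ)) = volume := by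
  simpa using hausdorffMeasure_pi_real (ι := Fin m)

theorem hausdorffMeasure_sphere_lt_top (m : ℕ) :
    μH[m] (sphere (0 : EuclideanSpace ℝ (Fin (m + 1))) 1) < ⊤ := by
  refine (measure_mono (sphere_subset_iUnion_image_cubeFaceToSphere m)).trans_lt ?_
  refine (measure_iUnion_fintype_le _ _).trans_lt (ENNReal.sum_lt_top.mpr fun j _ => ?_)
  refine measure_biUnion_lt_top (Set.toFinite _) fun ε hε => ?_
  obtain ⟨K, hK⟩ := exists_lipschitzWith_cubeFaceToSphere j (ε := ε) (by
    rcases hε with rfl | rfl <;> simp)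
  refine (hK.hausdorffMeasure_image_le (Nat.cast_nonneg m) _).trans_lt ?_
  rw [hausdorffMeasure_fin_eq_volume]
  exact ENNReal.mul_lt_top (by simp) measure_closedBall_lt_top

theorem closedBall_subset_image_init_sphere (m : ℕ) :
    closedBall (0 : Fin m → ℝ) (1 / (m + 1)) ⊆
      (fun y : EuclideanSpace ℝ (Fin (m + 1)) => Fin.init y) '' sphere 0 1 := by
  intro u hu
  have hsum : ∑ i, u i ^ 2 ≤ 1 := by
    have hu' : ∀ i, u i ^ 2 ≤ (1 / (m + 1)) ^ 2 := fun i => by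
      rw [← sq_abs, ← Real.norm_eq_abs]
      exact pow_le_pow_left₀ (norm_nonneg _)
        ((norm_le_pi_norm u i).trans (mem_closedBall_zero_iff.mp hu)) 2
    calc ∑ i, u i ^ 2 ≤ ∑ _i : Fin m, (1 / (m + 1) : ℝ) ^ 2 := sum_le_sum fun i _ => hu' i
      _ ≤ 1 := by
        rw [sum_const, card_univ, Fintype.card_fin, nsmul_eq_mul]
        rw [div_pow, one_pow, mul_one_div, div_le_one (by positivity)]
        nlinarith
  refine ⟨WithLp.toLp 2 (Fin.snoc u √(1 - ∑ i, u i ^ 2)), ?_, Fin.init_snoc _ _⟩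
  rw [mem_sphere_zero_iff_norm, ← sq_eq_sq₀ (norm_nonneg _) zero_le_one,
    EuclideanSpace.real_norm_sq_eq, Fin.sum_univ_castSucc]
  simp only [Fin.snoc_castSucc, Fin.snoc_last, Real.sq_sqrt (sub_nonneg.mpr hsum)]
  ring

theorem hausdorffMeasure_sphere_pos (m : ℕ) :
    0 < μH[m] (sphere (0 : EuclideanSpace ℝ (Fin (m + 1))) 1) := by
  have hinit : LipschitzWith 1 fun y : EuclideanSpace ℝ (Fin (m + 1)) => Fin.init y :=
    LipschitzWith.of_dist_le_mul fun x y => by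
      rw [NNReal.coe_one, one_mul, dist_pi_le_iff dist_nonneg]
      exact fun i => PiLp.dist_apply_le x y _
  calc 0 < μH[m] (closedBall (0 : Fin m → ℝ) (1 / (m + 1))) := by
        rw [hausdorffMeasure_fin_eq_volume]; exact measure_closedBall_pos _ _ (by positivity)
    _ ≤ μH[m] ((fun y : EuclideanSpace ℝ (Fin (m + 1)) => Fin.init y) '' sphere 0 1) :=
        measure_mono (closedBall_subset_image_init_sphere m)
    _ ≤ μH[m] (sphere (0 : EuclideanSpace ℝ (Fin (m + 1))) 1) := by
        simpa using hinit.hausdorffMeasure_image_le (Nat.cast_nonneg m) _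

section SphereIntegrals

variable {E : Type*} [NormedAddCommGroup E] [InnerProductSpace ℝ E] [MeasurableSpace E]
  [BorelSpace E]

theorem setIntegral_sphere_comp_linearIsometryEquiv (e : E ≃ₗᵢ[ℝ] E) (s r : ℝ) (F : E → ℝ) :
    ∫ y in sphere 0 r, F (e y) ∂μH[s] = ∫ y in sphere 0 r, F y ∂μH[s] := by
  have hpre : e.toIsometryEquiv ⁻¹' sphere 0 r = sphere 0 r := by
    ext y
    simp
  rw [← (e.toIsometryEquiv.measurePreserving_hausdorffMeasure s).setIntegral_preimage_emb
    e.toHomeomorph.measurableEmbedding F, hpre]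
  rfl

theorem setIntegral_sphere_comp_inner_eq_of_norm_eq {u v : E} (h : ‖u‖ = ‖v‖) (s r : ℝ)
    (φ : ℝ → ℝ) : ∫ y in sphere 0 r, φ ⟪u, y⟫ ∂μH[s] = ∫ y in sphere 0 r, φ ⟪v, y⟫ ∂μH[s] := by
  set e := (ℝ ∙ (u - v))ᗮ.reflection
  have hinner : ∀ y, ⟪v, y⟫ = ⟪u, e.symm y⟫ := fun y => by
    rw [← Submodule.reflection_sub h, ← e.inner_map_map u, e.apply_symm_apply]
  simp_rw [hinner]
  exact (setIntegral_sphere_comp_linearIsometryEquiv e.symm s r fun y => φ ⟪u, y⟫).symm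

theorem setIntegral_sphere_inner_pow (s r : ℝ) (k : ℕ) {u : E} (hu : ‖u‖ = 1) (x : E) :
    ∫ y in sphere 0 r, ⟪x, y⟫ ^ k ∂μH[s] = ‖x‖ ^ k * ∫ y in sphere 0 r, ⟪u, y⟫ ^ k ∂μH[s] := by
  rcases eq_or_ne x 0 with rfl | hx
  · rcases k with _ | k <;> simp
  conv_lhs => rw [← norm_smul_normalize x]
  simp_rw [real_inner_smul_left, mul_pow]
  rw [integral_const_mul, setIntegral_sphere_comp_inner_eq_of_norm_eq
    ((norm_normalize hx).trans hu.symm) s r (· ^ k)]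

theorem setIntegral_sphere_inner_pow_pos [FiniteDimensional ℝ E] {s : ℝ}
    (hpos : 0 < μH[s] (sphere (0 : E) 1)) (hfin : μH[s] (sphere (0 : E) 1) < ⊤) (t : ℕ)
    {u : E} (hu : ‖u‖ = 1) : 0 < ∫ y in sphere 0 1, ⟪u, y⟫ ^ (2 * t) ∂μH[s] := by
  have hn : 0 < Module.finrank ℝ E :=
    have : Nontrivial E := ⟨u, 0, by rintro rfl; simp at hu⟩
    Module.finrank_pos
  have b := stdOrthonormalBasis ℝ E
  generalize Module.finrank ℝ E = n at hn b
  have hint : ∀ v : E, IntegrableOn (fun y => ⟪v, y⟫ ^ (2 * t)) (sphere 0 1) μH[s] := fun v =>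
    ((continuous_const.inner continuous_id).pow _).continuousOn.integrableOn_of_subset_isCompact
      (isCompact_sphere 0 1) isClosed_sphere.measurableSet subset_rfl hfin.ne
  have hmean : ∀ y ∈ sphere (0 : E) 1, (1 / n : ℝ) ^ t ≤ ∑ i, (1 / n : ℝ) * ⟪b i, y⟫ ^ (2 * t) := by
    intro y hy
    have hsq : ∑ i, (1 / n : ℝ) * ⟪b i, y⟫ ^ 2 = (1 / n : ℝ) := by
      rw [← mul_sum, b.sum_sq_inner_right, mem_sphere_zero_iff_norm.mp hy, one_pow, mul_one]
    have := Real.pow_arith_mean_le_arith_mean_pow univ (fun _ => (1 / n : ℝ))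
      (fun i => ⟪b i, y⟫ ^ 2) (fun _ _ => by positivity) (by simp [hn.ne'])
      (fun _ _ => sq_nonneg _) t
    simpa only [hsq, ← pow_mul] using this
  calc 0 < (μH[s] (sphere (0 : E) 1)).toReal * (1 / n : ℝ) ^ t :=
        mul_pos (ENNReal.toReal_pos hpos.ne' hfin.ne) (by positivity)
    _ = ∫ _ in sphere (0 : E) 1, (1 / n : ℝ) ^ t ∂μH[s] := by
        rw [setIntegral_const, smul_eq_mul, measureReal_def]
    _ ≤ ∫ y in sphere 0 1, ∑ i, (1 / n : ℝ) * ⟪b i, y⟫ ^ (2 * t) ∂μH[s] :=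
        setIntegral_mono_on (integrableOn_const hfin.ne)
          (integrable_finsetSum _ fun i _ => (hint (b i)).const_mul _)
          isClosed_sphere.measurableSet hmean
    _ = ∫ y in sphere 0 1, ⟪u, y⟫ ^ (2 * t) ∂μH[s] := by
        rw [integral_finsetSum _ fun i _ => (hint (b i)).const_mul _]
        have hbi : ∀ i, ∫ y in sphere 0 1, ⟪b i, y⟫ ^ (2 * t) ∂μH[s] =
            ∫ y in sphere 0 1, ⟪u, y⟫ ^ (2 * t) ∂μH[s] := fun i =>
          setIntegral_sphere_comp_inner_eq_of_norm_eq ((b.norm_eq_one i).trans hu.symm) s 1 _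
        simp_rw [integral_const_mul, hbi, sum_const, card_univ, Fintype.card_fin, nsmul_eq_mul]
        field_simp

end SphereIntegrals

theorem exists_sphere_weights_iff_exists_vectors {E ι : Type*} [NormedAddCommGroup E]
    [InnerProductSpace ℝ E] [Nontrivial E] [Fintype ι] {a : ℝ} (ha : 0 < a) {k : ℕ}
    (hk : k ≠ 0) :
    (∃ (x : ι → E) (lam : ι → ℝ), (∀ i, x i ∈ sphere 0 1) ∧ (∀ i, 0 ≤ lam i) ∧
        ∀ w, a * ‖w‖ ^ k = ∑ i, lam i * ⟪w, x i⟫ ^ k) ↔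
      ∃ r : ι → E, ∀ w, ∑ i, ⟪w, r i⟫ ^ k = ‖w‖ ^ k := by
  constructor
  · rintro ⟨x, lam, -, hlam, hx⟩
    refine ⟨fun i => (lam i / a) ^ (k⁻¹ : ℝ) • x i, fun w => ?_⟩
    have hroot : ∀ i, ((lam i / a) ^ (k⁻¹ : ℝ)) ^ k = lam i / a := fun i =>
      Real.rpow_inv_natCast_pow (div_nonneg (hlam i) ha.le) hk
    simp_rw [real_inner_smul_right, mul_pow, hroot, div_mul_eq_mul_div, ← sum_div, ← hx,
      mul_div_cancel_left₀ _ ha.ne']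
  · classical
    rintro ⟨r, hr⟩
    obtain ⟨e, he⟩ := (NormedSpace.sphere_nonempty (x := (0 : E)) (r := 1)).mpr zero_le_one
    refine ⟨fun i => if r i = 0 then e else normalize (r i), fun i => a * ‖r i‖ ^ k,
      fun i => ?_, fun i => by positivity, fun w => ?_⟩
    · dsimp only
      split_ifs with h
      · exact he
      · exact mem_sphere_zero_iff_norm.mpr (norm_normalize h)
    · rw [← hr, mul_sum]
      refine sum_congr rfl fun i _ => ?_
      dsimp only
      split_ifs with h
      · simp [h, hk]
      · conv_lhs => rw [← norm_smul_normalize (r i)]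
        rw [real_inner_smul_right]
        ring

theorem forall_isHomogeneous_setIntegral_eq_iff {σ ι : Type*} [Fintype σ] [Fintype ι] {n : ℕ}
    {μ : Measure (EuclideanSpace ℝ σ)} {K : Set (EuclideanSpace ℝ σ)} (hK : IsCompact K)
    (hμK : μ K ≠ ⊤) (c : ℝ) (x : ι → EuclideanSpace ℝ σ) (lam : ι → ℝ) :
    (∀ f : MvPolynomial σ ℝ, f.IsHomogeneous n →
        c * ∫ y in K, MvPolynomial.eval (fun j => y j) f ∂μ =
          ∑ i, lam i * MvPolynomial.eval (fun j => x i j) f) ↔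
      ∀ w, c * ∫ y in K, ⟪w, y⟫ ^ n ∂μ = ∑ i, lam i * ⟪w, x i⟫ ^ n := by
  have hint : ∀ f : MvPolynomial σ ℝ, IntegrableOn (fun y => f.eval fun j => y j) K μ := fun f =>
    ((MvPolynomial.continuous_eval f).comp (PiLp.continuous_ofLp 2 _)).continuousOn
      |>.integrableOn_of_subset_isCompact hK hK.measurableSet subset_rfl hμK
  let L₁ : MvPolynomial σ ℝ →ₗ[ℝ] ℝ :=
    { toFun := fun f => c * ∫ y in K, f.eval (fun j => y j) ∂μ
      map_add' := fun f g => by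
        simp only [map_add]
        rw [integral_add (hint f) (hint g), mul_add]
      map_smul' := fun a f => by
        simp only [MvPolynomial.smul_eval, integral_const_mul, smul_eq_mul, RingHom.id_apply]
        ring }
  let L₂ : MvPolynomial σ ℝ →ₗ[ℝ] ℝ :=
    ∑ i, lam i • (MvPolynomial.aeval fun j => x i j).toLinearMap
  have hL₂ : ∀ f, L₂ f = ∑ i, lam i * f.eval fun j => x i j := fun f => by
    simp [L₂]
  have := MvPolynomial.forall_isHomogeneous_map_eq_iff (n := n) L₁ L₂
  simp only [hL₂, L₁, LinearMap.coe_mk, AddHom.coe_mk, MvPolynomial.eval_sum_C_mul_X_pow] at this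
  exact this.trans ⟨fun h w => h w.ofLp, fun h y => h _⟩

open RealInnerProductSpace in
theorem cubature_index_iff_isometric_embedding_general
    (d t N : ℕ) (hd : 2 ≤ d) (ht : 1 ≤ t) :
    (∃ (x : Fin N → EuclideanSpace ℝ (Fin d)) (lam : Fin N → ℝ),
      (∀ i, x i ∈ Metric.sphere (0 : EuclideanSpace ℝ (Fin d)) 1) ∧
      (∀ i, 0 ≤ lam i) ∧
      (∀ f : MvPolynomial (Fin d) ℝ, f.IsHomogeneous (2 * t) →
        (μH[(d : ℝ) - 1] (Metric.sphere (0 : EuclideanSpace ℝ (Fin d)) 1)).toReal⁻¹ *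
            ∫ y in Metric.sphere (0 : EuclideanSpace ℝ (Fin d)) 1,
              MvPolynomial.eval (fun j => y j) f ∂μH[(d : ℝ) - 1]
          = ∑ i, lam i * MvPolynomial.eval (fun j => x i j) f))
    ↔
    (∃ r : Fin N → EuclideanSpace ℝ (Fin d),
      ∀ x : EuclideanSpace ℝ (Fin d), ∑ i, ⟪x, r i⟫ ^ (2 * t) = ⟪x, x⟫ ^ t) := by
  obtain ⟨m, rfl⟩ : ∃ m, d = m + 1 := ⟨d - 1, by omega⟩
  rw [show ((m + 1 : ℕ) : ℝ) - 1 = m by push_cast; ring]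
  have hpos := hausdorffMeasure_sphere_pos m
  have hfin := hausdorffMeasure_sphere_lt_top m
  obtain ⟨u, hu⟩ : ∃ u : EuclideanSpace ℝ (Fin (m + 1)), ‖u‖ = 1 :=
    ⟨EuclideanSpace.single 0 1, by simp⟩
  set a := (μH[m] (sphere (0 : EuclideanSpace ℝ (Fin (m + 1))) 1)).toReal⁻¹ *
    ∫ y in sphere 0 1, ⟪u, y⟫ ^ (2 * t) ∂μH[m]
  have ha : 0 < a := mul_pos (inv_pos.mpr (ENNReal.toReal_pos hpos.ne' hfin.ne))
    (setIntegral_sphere_inner_pow_pos hpos hfin t hu)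
  have hmoment : ∀ w : EuclideanSpace ℝ (Fin (m + 1)),
      (μH[m] (sphere (0 : EuclideanSpace ℝ (Fin (m + 1))) 1)).toReal⁻¹ *
        ∫ y in sphere 0 1, ⟪w, y⟫ ^ (2 * t) ∂μH[m] = a * ‖w‖ ^ (2 * t) := fun w => by
    rw [setIntegral_sphere_inner_pow _ _ _ hu]
    ring
  simp_rw [forall_isHomogeneous_setIntegral_eq_iff (isCompact_sphere 0 1) hfin.ne, hmoment,
    real_inner_self_eq_norm_sq, ← pow_mul]
  exact exists_sphere_weights_iff_exists_vectors ha (by omega)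

open RealInnerProductSpace in
/-- Lyubich–Vaserstein: a positive cubature rule of index `2t` on `S^{d-1}` with `N` nodes
exists iff `⟨x,x⟩^t` is a sum of `N` powers `⟨x,r_i⟩^{2t}` of linear forms. -/
theorem cubature_index_iff_isometric_embedding
    (d t N : ℕ) (hd : 2 ≤ d) (ht : 1 ≤ t) (hN : 1 ≤ N) :
    (∃ (x : Fin N → EuclideanSpace ℝ (Fin d)) (lam : Fin N → ℝ),
      (∀ i, x i ∈ Metric.sphere (0 : EuclideanSpace ℝ (Fin d)) 1) ∧
      (∀ i, 0 ≤ lam i) ∧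
      (∀ f : MvPolynomial (Fin d) ℝ, f.IsHomogeneous (2 * t) →
        (μH[(d : ℝ) - 1] (Metric.sphere (0 : EuclideanSpace ℝ (Fin d)) 1)).toReal⁻¹ *
            ∫ y in Metric.sphere (0 : EuclideanSpace ℝ (Fin d)) 1,
              MvPolynomial.eval (fun j => y j) f ∂μH[(d : ℝ) - 1]
          = ∑ i, lam i * MvPolynomial.eval (fun j => x i j) f))
    ↔
    (∃ r : Fin N → EuclideanSpace ℝ (Fin d),
      ∀ x : EuclideanSpace ℝ (Fin d), ∑ i, ⟪x, r i⟫ ^ (2 * t) = ⟪x, x⟫ ^ t) :=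
  cubature_index_iff_isometric_embedding_general d t N hd ht
end

section
/- Let d ≥ 1 and γ > −1, and in d+1 real variables set Y = S_{(8)} + a·S_{(6,2)} + b·S_{(4,4)}, where a = −4(γ+4)/(d(γ+1)) and b = 6(γ+3)(γ+4)/(d(γ+1)(γ+2)) and S_ℓ are monomial symmetric polynomials. Then for every x ∈ ℝ^{d+1} with all coordinates nonzero, Σ_{i=1}^{d+1} ∂²Y/∂x_i²(x) + (2γ+1) Σ_{i=1}^{d+1} (1/x_i) ∂Y/∂x_i(x) = 0. -/
/-!
Through the power sums `p k = ∑ i, x i ^ k` one has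
`Y = (1 - a - b/2) p 8 + a p 6 p 2 + (b/2) (p 4)^2`, so along the `i`-th coordinate `Y` is the
even octic `t^8 + a r₂ t^6 + b r₄ t^4 + a r₆ t^2 + const` with `r k = p k - x i ^ k`.
The operator `∂² + (2γ+1) t⁻¹ ∂` maps `t^(2k)` to `2k(2k+2γ) t^(2k-2)`, and summing over `i` gives
`(16(γ+4) + 4(γ+1) a d) p 6 + (12(γ+3) a + 8(γ+2) b) (p 2 p 4 - p 6)`.
Both coefficients vanish for the given `a` and `b`.
-/

open MeasureTheory Finset

/-- `Y = S_{(8)} + a S_{(6,2)} + b S_{(4,4)}` in `d+1` real variables. -/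
noncomputable def Ypoly (d : ℕ) (a b : ℝ) (x : Fin (d + 1) → ℝ) : ℝ :=
  (∑ i, x i ^ 8)
    + a * ∑ i, ∑ j ∈ Finset.univ.filter (fun j => j ≠ i), x i ^ 6 * x j ^ 2
    + b * ∑ i, ∑ j ∈ Finset.univ.filter (fun j => i < j), x i ^ 4 * x j ^ 4

theorem sum_sum_ne_mul {ι R : Type*} [Fintype ι] [DecidableEq ι] [CommRing R] (f g : ι → R) :
    ∑ i, ∑ j ∈ univ.filter (fun j => j ≠ i), f i * g j
      = (∑ i, f i) * (∑ j, g j) - ∑ i, f i * g i := by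
  simp only [filter_ne', sum_mul, ← mul_sum, ← sum_sub_distrib,
    sum_erase_eq_sub (mem_univ _)]

theorem two_mul_sum_sum_lt_mul {ι R : Type*} [Fintype ι] [LinearOrder ι] [CommRing R]
    (f : ι → R) :
    2 * ∑ i, ∑ j ∈ univ.filter (fun j => i < j), f i * f j
      = (∑ i, f i) ^ 2 - ∑ i, f i ^ 2 := by
  have hsplit : ∀ i, ∑ j ∈ univ.filter (fun j => j ≠ i), f i * f j
      = ∑ j ∈ univ.filter (fun j => i < j), f i * f j
        + ∑ j ∈ univ.filter (fun j => j < i), f i * f j := by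
    intro i
    rw [← sum_filter_add_sum_filter_not _ (fun j => i < j), filter_filter, filter_filter]
    congr 2 <;> ext j <;> simp only [mem_filter, mem_univ, true_and] <;> grind
  have hswap : ∑ i, ∑ j ∈ univ.filter (fun j => j < i), f i * f j
      = ∑ i, ∑ j ∈ univ.filter (fun j => i < j), f i * f j := by
    rw [sum_comm' (t' := univ) (s' := fun j => univ.filter (fun i => j < i)) (by simp)]
    simp only [mul_comm]
  have hne := sum_sum_ne_mul f f
  rw [sum_congr rfl fun i _ => hsplit i, sum_add_distrib, hswap] at hne
  rw [two_mul, hne]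
  simp only [sq]

theorem sum_update_pow {ι R : Type*} [Fintype ι] [DecidableEq ι] [CommRing R]
    (x : ι → R) (i : ι) (t : R) (n : ℕ) :
    ∑ j, Function.update x i t j ^ n = ∑ j, x j ^ n - x i ^ n + t ^ n := by
  have hpow : ∀ j, Function.update x i t j ^ n
      = Function.update (fun j => x j ^ n) i (t ^ n) j :=
    fun j => by rcases eq_or_ne j i with rfl | h <;> simp [*]
  simp only [hpow, sum_update_of_mem (mem_univ i), sdiff_singleton_eq_erase,
    sum_erase_eq_sub (mem_univ i)]
  ring

theorem Ypoly_eq_powerSums (d : ℕ) (a b : ℝ) (x : Fin (d + 1) → ℝ) :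
    Ypoly d a b x = (1 - a - b / 2) * ∑ i, x i ^ 8 + a * (∑ i, x i ^ 6) * (∑ i, x i ^ 2)
      + b / 2 * (∑ i, x i ^ 4) ^ 2 := by
  have h62 := sum_sum_ne_mul (fun i => x i ^ 6) (fun i => x i ^ 2)
  have h44 := two_mul_sum_sum_lt_mul (fun i => x i ^ 4)
  simp only [← pow_add, ← pow_mul, Nat.reduceAdd, Nat.reduceMul] at h62 h44
  rw [Ypoly, h62]
  linear_combination b / 2 * h44

theorem Ypoly_update (d : ℕ) (a b : ℝ) (x : Fin (d + 1) → ℝ) (i : Fin (d + 1)) (t : ℝ) :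
    Ypoly d a b (Function.update x i t)
      = t ^ 8 + a * (∑ j, x j ^ 2 - x i ^ 2) * t ^ 6 + b * (∑ j, x j ^ 4 - x i ^ 4) * t ^ 4
        + a * (∑ j, x j ^ 6 - x i ^ 6) * t ^ 2 + Ypoly d a b (Function.update x i 0) := by
  simp only [Ypoly_eq_powerSums, sum_update_pow]
  ring

theorem hasDerivAt_evenOctic (A B C D t : ℝ) :
    HasDerivAt (fun t : ℝ => t ^ 8 + A * t ^ 6 + B * t ^ 4 + C * t ^ 2 + D)
      (8 * t ^ 7 + 6 * A * t ^ 5 + 4 * B * t ^ 3 + 2 * C * t) t := by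
  refine (((((hasDerivAt_pow 8 t).add ((hasDerivAt_pow 6 t).const_mul A)).add
      ((hasDerivAt_pow 4 t).const_mul B)).add
      ((hasDerivAt_pow 2 t).const_mul C)).add (hasDerivAt_const t D)).congr_deriv ?_
  push_cast
  ring

theorem hasDerivAt_evenOctic_deriv (A B C t : ℝ) :
    HasDerivAt (fun t : ℝ => 8 * t ^ 7 + 6 * A * t ^ 5 + 4 * B * t ^ 3 + 2 * C * t)
      (56 * t ^ 6 + 30 * A * t ^ 4 + 12 * B * t ^ 2 + 2 * C) t := by
  refine (((((hasDerivAt_pow 7 t).const_mul 8).add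
      ((hasDerivAt_pow 5 t).const_mul (6 * A))).add
      ((hasDerivAt_pow 3 t).const_mul (4 * B))).add
      ((hasDerivAt_id t).const_mul (2 * C))).congr_deriv ?_
  push_cast
  ring

theorem iteratedDeriv_two_add_mul_inv_deriv_evenOctic (γ A B C D t : ℝ) (ht : t ≠ 0) :
    iteratedDeriv 2 (fun t : ℝ => t ^ 8 + A * t ^ 6 + B * t ^ 4 + C * t ^ 2 + D) t
      + (2 * γ + 1)
        * (t⁻¹ * deriv (fun t : ℝ => t ^ 8 + A * t ^ 6 + B * t ^ 4 + C * t ^ 2 + D) t)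
      = 16 * (γ + 4) * t ^ 6 + 12 * (γ + 3) * A * t ^ 4 + 8 * (γ + 2) * B * t ^ 2
        + 4 * (γ + 1) * C := by
  have hderiv := fun t => (hasDerivAt_evenOctic A B C D t).deriv
  rw [iteratedDeriv_succ, iteratedDeriv_one, funext hderiv,
    (hasDerivAt_evenOctic_deriv A B C t).deriv]
  field_simp
  ring

theorem dunkl_laplacian_Ypoly (d : ℕ) (γ a b : ℝ) (x : Fin (d + 1) → ℝ)
    (hx : ∀ i, x i ≠ 0) :
    (∑ i, iteratedDeriv 2 (fun t => Ypoly d a b (Function.update x i t)) (x i))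
      + (2 * γ + 1) *
          ∑ i, (x i)⁻¹ * deriv (fun t => Ypoly d a b (Function.update x i t)) (x i)
      = (16 * (γ + 4) + 4 * (γ + 1) * a * d) * ∑ i, x i ^ 6
        + (12 * (γ + 3) * a + 8 * (γ + 2) * b)
          * ((∑ i, x i ^ 2) * (∑ i, x i ^ 4) - ∑ i, x i ^ 6) := by
  have hterm : ∀ i, iteratedDeriv 2 (fun t => Ypoly d a b (Function.update x i t)) (x i)
      + (2 * γ + 1) * ((x i)⁻¹ * deriv (fun t => Ypoly d a b (Function.update x i t)) (x i))
      = (16 * (γ + 4) - 12 * (γ + 3) * a - 8 * (γ + 2) * b - 4 * (γ + 1) * a) * x i ^ 6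
        + 12 * (γ + 3) * a * (∑ j, x j ^ 2) * x i ^ 4
        + 8 * (γ + 2) * b * (∑ j, x j ^ 4) * x i ^ 2
        + 4 * (γ + 1) * a * ∑ j, x j ^ 6 := by
    intro i
    rw [funext (Ypoly_update d a b x i),
      iteratedDeriv_two_add_mul_inv_deriv_evenOctic γ _ _ _ _ _ (hx i)]
    ring
  rw [mul_sum, ← sum_add_distrib, sum_congr rfl fun i _ => hterm i]
  simp only [sum_add_distrib, ← mul_sum, sum_const, card_univ, Fintype.card_fin, nsmul_eq_mul]
  push_cast
  ring

/-- For the stated values of `a` and `b`, `Y` satisfies the Dunkl Laplacian equation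
`∑ ∂²Y/∂x_i² + (2γ+1) ∑ (1/x_i) ∂Y/∂x_i = 0` at every point with nonzero coordinates. -/
theorem dunkl_laplacian_Y_eq_zero
    (d : ℕ) (hd : 1 ≤ d) (γ : ℝ) (hγ : -1 < γ) (a b : ℝ)
    (ha : a = -(4 * (γ + 4)) / (d * (γ + 1)))
    (hb : b = 6 * (γ + 3) * (γ + 4) / (d * (γ + 1) * (γ + 2)))
    (x : Fin (d + 1) → ℝ) (hx : ∀ i, x i ≠ 0) :
    (∑ i, iteratedDeriv 2 (fun t => Ypoly d a b (Function.update x i t)) (x i))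
      + (2 * γ + 1) *
          ∑ i, (x i)⁻¹ * deriv (fun t => Ypoly d a b (Function.update x i t)) (x i) = 0 := by
  have hd₀ : (d : ℝ) ≠ 0 := by exact_mod_cast (by omega : d ≠ 0)
  have hγ₁ : γ + 1 ≠ 0 := by linarith
  have hγ₂ : γ + 2 ≠ 0 := by linarith
  have hp6 : 16 * (γ + 4) + 4 * (γ + 1) * a * d = 0 := by
    rw [ha]; field_simp; ring
  have hmixed : 12 * (γ + 3) * a + 8 * (γ + 2) * b = 0 := by
    rw [ha, hb]; field_simp; ring
  rw [dunkl_laplacian_Ypoly d γ a b x hx, hp6, hmixed, zero_mul, zero_mul, add_zero]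
end

section
/- (Hurwitz's identity.) For all real x_1, x_2, x_3, x_4: 5040·(x_1²+x_2²+x_3²+x_4²)⁴ = 6·Σ_{i=1}^4 (2x_i)⁸ + 60·Σ_{1≤i<j≤4} [ (x_i+x_j)⁸ + (x_i−x_j)⁸ ] + Σ_{i=1}^4 Σ_{ {j,k}⊆{1,2,3,4}∖{i}, j<k } Σ_{ε,δ∈{−1,1}} (2x_i + ε x_j + δ x_k)⁸ + 6·Σ_{(ε_2,ε_3,ε_4)∈{−1,1}³} (x_1 + ε_2 x_2 + ε_3 x_3 + ε_4 x_4)⁸. -/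
/-!
Every linear form occurring on the right is, together with all its images under sign changes of
the variables, part of the sum, so each of the four orbit sums is a polynomial in `y i = x i ^ 2`,
symmetric of degree 4. Expanding the eighth powers by the multinomial theorem (only even exponents
survive the sign sums) writes each orbit sum in the basis of the five monomial symmetric functions
`m₄, m₃₁, m₂₂, m₂₁₁, m₁₁₁₁` of `y`, and so does `(∑ y i) ^ 4`. The identity is then five linear
equations in the weights `6, 60, 1, 6`.
-/

open Finset

namespace Hurwitz

section MonomialSymmetric

variable (y : Fin 4 → ℝ)

def msymm4 : ℝ := ∑ i, y i ^ 4

def msymm31 : ℝ := ∑ i, ∑ j ∈ univ.filter (fun j => j ≠ i), y i ^ 3 * y j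

def msymm22 : ℝ := ∑ i, ∑ j ∈ univ.filter (fun j => i < j), y i ^ 2 * y j ^ 2

def msymm211 : ℝ :=
  ∑ i, ∑ j ∈ univ.filter (fun j => j ≠ i), ∑ k ∈ univ.filter (fun k => k ≠ i ∧ j < k),
    y i ^ 2 * y j * y k

def msymm1111 : ℝ := ∏ i, y i

theorem sum_pow_four :
    (∑ i, y i) ^ 4
      = msymm4 y + 4 * msymm31 y + 6 * msymm22 y + 12 * msymm211 y + 24 * msymm1111 y := by
  simp +decide only [msymm4, msymm31, msymm22, msymm211, msymm1111, sum_filter,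
    Fin.sum_univ_four, Fin.prod_univ_four, ite_true, ite_false]
  ring

end MonomialSymmetric

theorem sum_two_mul_pow_eight (x : Fin 4 → ℝ) :
    ∑ i, (2 * x i) ^ 8 = 256 * msymm4 (x ^ 2) := by
  simp only [msymm4, Fin.sum_univ_four, Pi.pow_apply]
  ring

theorem sum_add_pow_eight_add_sub_pow_eight (x : Fin 4 → ℝ) :
    ∑ i, ∑ j ∈ univ.filter (fun j => i < j), ((x i + x j) ^ 8 + (x i - x j) ^ 8)
      = 6 * msymm4 (x ^ 2) + 56 * msymm31 (x ^ 2) + 140 * msymm22 (x ^ 2) := by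
  simp +decide only [msymm4, msymm31, msymm22, sum_filter, Fin.sum_univ_four, Pi.pow_apply,
    ite_true, ite_false]
  ring

theorem sum_two_mul_add_signs_pow_eight (x : Fin 4 → ℝ) :
    ∑ i, ∑ j ∈ univ.filter (fun j => j ≠ i), ∑ l ∈ univ.filter (fun l => l ≠ i ∧ j < l),
        ∑ ε ∈ ({-1, 1} : Finset ℝ), ∑ δ ∈ ({-1, 1} : Finset ℝ), (2 * x i + ε * x j + δ * x l) ^ 8
      = 3096 * msymm4 (x ^ 2) + 15456 * msymm31 (x ^ 2) + 18480 * msymm22 (x ^ 2)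
        + 40320 * msymm211 (x ^ 2) := by
  simp +decide only [msymm4, msymm31, msymm22, msymm211, sum_filter, Fin.sum_univ_four,
    Pi.pow_apply, sum_pair (show (-1 : ℝ) ≠ 1 by norm_num), ite_true, ite_false]
  ring

theorem sum_signs_pow_eight (x : Fin 4 → ℝ) :
    ∑ ε ∈ ({-1, 1} : Finset ℝ), ∑ δ ∈ ({-1, 1} : Finset ℝ), ∑ η ∈ ({-1, 1} : Finset ℝ),
        (x 0 + ε * x 1 + δ * x 2 + η * x 3) ^ 8
      = 8 * (msymm4 (x ^ 2) + 28 * msymm31 (x ^ 2) + 70 * msymm22 (x ^ 2)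
        + 420 * msymm211 (x ^ 2) + 2520 * msymm1111 (x ^ 2)) := by
  simp +decide only [msymm4, msymm31, msymm22, msymm211, msymm1111, sum_filter,
    Fin.sum_univ_four, Fin.prod_univ_four, Pi.pow_apply, sum_pair (show (-1 : ℝ) ≠ 1 by norm_num),
    ite_true, ite_false]
  ring

end Hurwitz

open Hurwitz in
/-- Hurwitz's identity: a representation of `(x₁²+x₂²+x₃²+x₄²)⁴` as a rational linear
combination of eighth powers of linear forms. -/
theorem hurwitz_identity (x : Fin 4 → ℝ) :
    5040 * (∑ i, x i ^ 2) ^ 4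
      = 6 * (∑ i, (2 * x i) ^ 8)
        + 60 * (∑ i, ∑ j ∈ Finset.univ.filter (fun j => i < j),
            ((x i + x j) ^ 8 + (x i - x j) ^ 8))
        + (∑ i, ∑ j ∈ Finset.univ.filter (fun j => j ≠ i),
            ∑ l ∈ Finset.univ.filter (fun l => l ≠ i ∧ j < l),
              ∑ ε ∈ ({-1, 1} : Finset ℝ), ∑ δ ∈ ({-1, 1} : Finset ℝ),
                (2 * x i + ε * x j + δ * x l) ^ 8)
        + 6 * (∑ ε ∈ ({-1, 1} : Finset ℝ), ∑ δ ∈ ({-1, 1} : Finset ℝ),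
            ∑ η ∈ ({-1, 1} : Finset ℝ),
              (x 0 + ε * x 1 + δ * x 2 + η * x 3) ^ 8) := by
  have h := sum_pow_four (x ^ 2)
  simp only [Pi.pow_apply] at h
  rw [h, sum_two_mul_pow_eight, sum_add_pow_eight_add_sub_pow_eight,
    sum_two_mul_add_signs_pow_eight, sum_signs_pow_eight]
  ring
end
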